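/- arXiv:2605.15002 — 3 statements merged into one kernel-verified Lean document; each statement's English description precedes it below -/
import Mathlib

section
/- Let U = f₁, …, f_m, 𝟏 be a sequence of units with corresponding reason list R = R₁, …, R_m, R_⊥, where each fᵢ is either a decision (Rᵢ = ∗) or is deduced by unit propagation on the clause Rᵢ from the units {f₁,…,f_{i-1}}, the contradiction 𝟏 is deduced by unit propagation on R_⊥ from {f₁,…,f_m}, and at least one fᵢ is a decision. Then the 1-UIP-like clause learning procedure — starting with C = R_⊥ and, while C is not asserting, finding the largest i with ⟨C⟩ ⊆ span(f₁,…,fᵢ) but ⟨C⟩ ⊄ span(f₁,…,f_{i-1}), isolating fᵢ in C as C' ∨ f and in Rᵢ as Rᵢ' ∨ g with ⟨C'⟩, ⟨Rᵢ'⟩ ⊆ span(f₁,…,f_{i-1}), and replacing C by C' ∨ Rᵢ' ∨ (f+g) — terminates and outputs an asserting conflict clause. -/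
/-!
Each learning step resolves the current clause `C` with the reason `Rᵢ` of its critical unit
`fᵢ` (a decision there would make `C` asserting at the level just below `fᵢ`, where it
propagates `fᵢ + 𝟏`). The learned clause `C'` has `⟨C'⟩ ⊆ span(f₁, …, f_{i-1})` whereas
`⟨C⟩ ⊄ span(f₁, …, f_{i-1})`, so the critical index strictly decreases and the procedure
terminates. Being a conflict clause is invariant: from the units `⟨C'⟩` the reason `Rᵢ`
deduces the pivot `h`, after which `⟨C⟩ ⊆ span(⟨C'⟩, h)`, and unit propagation from a larger
consistent span replays every conflict.
-/

namespace XorSAT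

/-- An affine equation over `n` Boolean variables: the coefficients of the `n`
variables together with a right-hand side, i.e. a vector in `F₂^(n+1)`. -/
abbrev Eqn (n : ℕ) : Type := (Fin n → ZMod 2) × ZMod 2

/-- The equation `𝟏`, i.e. `0 = 1`, satisfied by no assignment. -/
def oneEq (n : ℕ) : Eqn n := (0, 1)

/-- An assignment `x` satisfies the equation `(a, b)` iff `∑ aᵢ xᵢ = b`. -/
def Sats {n : ℕ} (x : Fin n → ZMod 2) (e : Eqn n) : Prop :=
  (∑ i, e.1 i * x i) = e.2

/-- A linear clause: a (finite) disjunction of affine equations. -/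
abbrev Clause (n : ℕ) : Type := Finset (Eqn n)

/-- An assignment satisfies a linear clause iff it satisfies some equation in it. -/
def SatsClause {n : ℕ} (x : Fin n → ZMod 2) (C : Clause n) : Prop :=
  ∃ e ∈ C, Sats x e

/-- A clause is non-tautological if some assignment falsifies every equation of it. -/
def NonTaut {n : ℕ} (C : Clause n) : Prop :=
  ∃ x : Fin n → ZMod 2, ∀ e ∈ C, ¬ Sats x e

/-- The linear negation `⟨C⟩` of a clause `C = f₁ ∨ … ∨ f_m`:
the `F₂`-span of `f₁ + 𝟏, …, f_m + 𝟏`. -/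
def linneg {n : ℕ} (C : Clause n) : Submodule (ZMod 2) (Eqn n) :=
  Submodule.span (ZMod 2) ((fun e => e + oneEq n) '' (C : Set (Eqn n)))

/-- A set of equations is consistent if some assignment satisfies all of them. -/
def Consistent {n : ℕ} (U : Set (Eqn n)) : Prop :=
  ∃ x : Fin n → ZMod 2, ∀ e ∈ U, Sats x e

/-- The `F₂`-linear span of a set of equations, as a submodule. -/
def spn {n : ℕ} (U : Set (Eqn n)) : Submodule (ZMod 2) (Eqn n) :=
  Submodule.span (ZMod 2) U


/-- Unit propagation on clause `C` from units `U` may deduce the equation `f`. -/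
def CanDeduce {n : ℕ} (U : Set (Eqn n)) (C : Clause n) (f : Eqn n) : Prop :=
  ¬ linneg C ≤ spn U ∧ linneg C ≤ spn (insert (f + oneEq n) U) ∧
    f ∉ spn U ∧ f + oneEq n ∉ spn U

/-- One step of unit propagation on the clause set `Δ`: a clause `C ∈ Δ` either
deduces the contradiction `𝟏` (if `⟨C⟩ ⊆ span U`) or deduces some equation `f`. -/
def UPStep {n : ℕ} (Δ : Set (Clause n)) (U U' : Set (Eqn n)) : Prop :=
  Consistent U ∧ ∃ C ∈ Δ,
    (linneg C ≤ spn U ∧ U' = insert (oneEq n) U) ∨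
    (∃ f, CanDeduce U C f ∧ U' = insert f U)

/-- A (finite) run of unit propagation on the clause set `Δ`. -/
def UPRun {n : ℕ} (Δ : Set (Clause n)) : Set (Eqn n) → Set (Eqn n) → Prop :=
  Relation.ReflTransGen (UPStep Δ)

/-- The units `V` are conflict-like w.r.t. `Δ`: some run of unit propagation
starting from `V` and using clauses of `Δ` deduces `𝟏`. -/
def ConflictLike {n : ℕ} (Δ : Set (Clause n)) (V : Set (Eqn n)) : Prop :=
  ∃ W, UPRun Δ V W ∧ oneEq n ∈ W

/-- The decomposition `(V', f)` is absorbed by `Δ`: unit propagation from units `V'`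
with clauses `Δ` either derives `𝟏` or derives a unit set whose span contains `f + 𝟏`. -/
def Absorbed {n : ℕ} (Δ : Set (Clause n)) (V' : Set (Eqn n)) (f : Eqn n) : Prop :=
  ∃ W, UPRun Δ V' W ∧ (oneEq n ∈ W ∨ f + oneEq n ∈ spn W)

/-- Unit propagation on the clause `C` from units `U` results in some
propagation (deducing `𝟏` or deducing some equation). -/
def CanPropagate {n : ℕ} (U : Set (Eqn n)) (C : Clause n) : Prop :=
  linneg C ≤ spn U ∨ ∃ f, CanDeduce U C f

/-- The units `f_j` with (0-based) index `j < i`, i.e. the paper's `U_i` is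
`prefixSet m f i` when `f_1, …, f_i` are `f 0, …, f (i-1)`. -/
def prefixSet {n : ℕ} (m : ℕ) (f : Fin m → Eqn n) (i : ℕ) : Set (Eqn n) :=
  {e | ∃ j : Fin m, (j : ℕ) < i ∧ e = f j}

/-- The level of the unit `f i`: the number of decisions among `f 0, …, f i`. -/
def levelOf {n : ℕ} (m : ℕ) (R : Fin m → Option (Clause n)) (i : Fin m) : ℕ :=
  (Finset.univ.filter (fun j : Fin m => (j : ℕ) ≤ (i : ℕ) ∧ (R j).isNone)).card

/-- The total number of decisions, i.e. the level of the final contradiction `𝟏`. -/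
def totalDecs {n : ℕ} (m : ℕ) (R : Fin m → Option (Clause n)) : ℕ :=
  (Finset.univ.filter (fun j : Fin m => (R j).isNone)).card

/-- The set of units of level at most `k`. -/
def levelPrefixSet {n : ℕ} (m : ℕ) (f : Fin m → Eqn n)
    (R : Fin m → Option (Clause n)) (k : ℕ) : Set (Eqn n) :=
  {e | ∃ j : Fin m, levelOf m R j ≤ k ∧ e = f j}

/-- A clause is asserting if its asserting level (the smallest level `k` such
that the units of level at most `k` allow unit propagation on it) is less than
the level of the contradiction `𝟏`. -/
def AssertingCl {n : ℕ} (m : ℕ) (f : Fin m → Eqn n)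
    (R : Fin m → Option (Clause n)) (C : Clause n) : Prop :=
  ∃ k < totalDecs m R, CanPropagate (levelPrefixSet m f R k) C

/-- The list of reason clauses, including the conflict reason `R_⊥`. -/
def reasonSet {n : ℕ} {m : ℕ} (R : Fin m → Option (Clause n)) (Rbot : Clause n) :
    Set (Clause n) :=
  {D | (∃ i, R i = some D) ∨ D = Rbot}

/-- A conflict clause w.r.t. the trail `f` and reasons `R, R_⊥`:
`⟨C⟩ ⊆ span(f_1, …, f_m)` and unit propagation starting with units `⟨C⟩` and
the reason clauses produces a contradiction. -/
def ConflictCl {n : ℕ} (m : ℕ) (f : Fin m → Eqn n)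
    (R : Fin m → Option (Clause n)) (Rbot : Clause n) (C : Clause n) : Prop :=
  linneg C ≤ spn (prefixSet m f m) ∧
  ConflictLike (reasonSet R Rbot) ((linneg C : Submodule (ZMod 2) (Eqn n)) : Set (Eqn n))

/-- One iteration of the 1-UIP-like clause learning loop: if the current clause
`C` is not asserting, find the largest `i` with `⟨C⟩ ⊆ span(f_1, …, f_i)` but
`⟨C⟩ ⊄ span(f_1, …, f_{i-1})`, isolate `f_i` in `C` (as `C₀ ∨ g` with
`⟨C₀⟩ ⊆ span(f_1, …, f_{i-1})`) and in its reason `R_i` (as `R₀ ∨ h`), and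
replace `C` by `C₀ ∨ R₀ ∨ (g+h)`. -/
def LearnStep {n : ℕ} (m : ℕ) (f : Fin m → Eqn n)
    (R : Fin m → Option (Clause n)) (C C' : Clause n) : Prop :=
  ¬ AssertingCl m f R C ∧
  ∃ (i : Fin m) (Ci : Clause n), R i = some Ci ∧
    linneg C ≤ spn (prefixSet m f ((i : ℕ) + 1)) ∧
    ¬ linneg C ≤ spn (prefixSet m f (i : ℕ)) ∧
    ∃ (C₀ R₀ : Clause n) (g h : Eqn n),
      linneg (insert g C₀) = linneg C ∧ linneg C₀ ≤ spn (prefixSet m f (i : ℕ)) ∧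
      linneg (insert h R₀) = linneg Ci ∧ linneg R₀ ≤ spn (prefixSet m f (i : ℕ)) ∧
      C' = insert (g + h) (C₀ ∪ R₀)

end XorSAT

open Submodule

theorem ZMod.eq_zero_or_eq_one (c : ZMod 2) : c = 0 ∨ c = 1 := by
  revert c; decide

section ZModTwo

variable {M : Type*} [AddCommGroup M] [Module (ZMod 2) M]

theorem ZModModule.mem_span_insert_iff {x a : M} {s : Set M} :
    x ∈ span (ZMod 2) (insert a s) ↔ x ∈ span (ZMod 2) s ∨ x + a ∈ span (ZMod 2) s := by
  rw [mem_span_insert']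
  constructor
  · rintro ⟨c, hc⟩
    obtain rfl | rfl := ZMod.eq_zero_or_eq_one c
    exacts [Or.inl (by simpa using hc), Or.inr (by simpa using hc)]
  · rintro (h | h)
    exacts [⟨0, by simpa using h⟩, ⟨1, by simpa using h⟩]

theorem ZModModule.add_mem_of_add_mem_of_add_mem {P : Submodule (ZMod 2) M} {x y a : M}
    (hx : x + a ∈ P) (hy : y + a ∈ P) : x + y ∈ P := by
  rw [← ZModModule.add_add_add_cancel x a y, add_comm a]
  exact P.add_mem hx hy

end ZModTwo

theorem Nat.exists_lt_not_and_succ {p : ℕ → Prop} (h0 : ¬ p 0) :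
    ∀ {m : ℕ}, p m → ∃ i < m, ¬ p i ∧ p (i + 1)
  | 0, hm => absurd hm h0
  | m + 1, hm => by
    by_cases hpm : p m
    · obtain ⟨i, hi, h⟩ := Nat.exists_lt_not_and_succ h0 hpm
      exact ⟨i, by omega, h⟩
    · exact ⟨m, by omega, hpm, hm⟩

namespace XorSAT

open ZModModule

variable {n : ℕ}

section LinearNegation

theorem linneg_le_iff {C : Clause n} {P : Submodule (ZMod 2) (Eqn n)} :
    linneg C ≤ P ↔ ∀ e ∈ C, e + oneEq n ∈ P := by
  rw [linneg, span_le, Set.image_subset_iff]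
  rfl

theorem add_oneEq_mem_linneg {e : Eqn n} {C : Clause n} (he : e ∈ C) :
    e + oneEq n ∈ linneg C :=
  linneg_le_iff.1 le_rfl e he

theorem linneg_mono {C D : Clause n} (h : C ⊆ D) : linneg C ≤ linneg D :=
  span_mono (Set.image_mono (Finset.coe_subset.2 h))

theorem linneg_insert (a : Eqn n) (C : Clause n) :
    linneg (insert a C) = span (ZMod 2) {a + oneEq n} ⊔ linneg C := by
  rw [linneg, Finset.coe_insert, Set.image_insert_eq, span_insert]
  rfl

theorem linneg_union (C D : Clause n) : linneg (C ∪ D) = linneg C ⊔ linneg D := by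
  rw [linneg, Finset.coe_union, Set.image_union, span_union]
  rfl

theorem linneg_insert_le_iff {a : Eqn n} {C : Clause n} {P : Submodule (ZMod 2) (Eqn n)} :
    linneg (insert a C) ≤ P ↔ a + oneEq n ∈ P ∧ linneg C ≤ P := by
  rw [linneg_insert, sup_le_iff, span_singleton_le_iff_mem]

theorem spn_linneg (C : Clause n) : spn (linneg C : Set (Eqn n)) = linneg C :=
  span_eq _

theorem spn_insert_le {a : Eqn n} {U : Set (Eqn n)} {P : Submodule (ZMod 2) (Eqn n)}
    (ha : a ∈ P) (hU : spn U ≤ P) : spn (insert a U) ≤ P :=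
  span_le.2 (Set.insert_subset ha (span_le.1 hU))

theorem spn_insert_le_spn_insert {a : Eqn n} {U V : Set (Eqn n)} (h : spn U ≤ spn V) :
    spn (insert a U) ≤ spn (insert a V) :=
  spn_insert_le (subset_span (Set.mem_insert a V)) (h.trans (span_mono (Set.subset_insert a V)))

theorem oneEq_mem_spn_insert_iff {a : Eqn n} {U : Set (Eqn n)} :
    oneEq n ∈ spn (insert a U) ↔ oneEq n ∈ spn U ∨ a + oneEq n ∈ spn U := by
  rw [spn, mem_span_insert_iff, add_comm]
  rfl

end LinearNegation

theorem consistent_of_oneEq_notMem_spn {U : Set (Eqn n)} (h : oneEq n ∉ spn U) :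
    Consistent U := by
  -- a functional killing `span U` but not `𝟏` is evaluation at an assignment satisfying `U`
  obtain ⟨φ, hφ1, hφU⟩ := exists_dual_map_eq_bot_of_notMem h inferInstance
  replace hφ1 : φ (oneEq n) = 1 := (ZMod.eq_zero_or_eq_one _).resolve_left hφ1
  refine ⟨fun i => φ (Pi.single i 1, 0), fun ⟨a, b⟩ he => ?_⟩
  have hdecomp :
      ((a, b) : Eqn n) = ∑ i, a i • ((Pi.single i 1, 0) : Eqn n) + b • oneEq n := by
    ext <;> simp [oneEq, Prod.fst_sum, Prod.snd_sum, Finset.sum_apply, Pi.single_apply]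
  have hφe : φ (a, b) ∈ (spn U).map φ := mem_map_of_mem (subset_span he)
  rw [hφU, mem_bot, hdecomp, map_add, map_smul, hφ1] at hφe
  simp_rw [map_sum, map_smul, smul_eq_mul] at hφe
  simpa [Sats, ZModModule.neg_eq_self] using eq_neg_of_add_eq_zero_left hφe

section Trail

variable {m : ℕ} (f : Fin m → Eqn n)

theorem prefixSet_zero : prefixSet m f 0 = ∅ := by
  simp [prefixSet]

theorem prefixSet_succ (i : Fin m) :
    prefixSet m f (i + 1) = insert (f i) (prefixSet m f i) := by
  ext e
  constructor
  · rintro ⟨j, hj, rfl⟩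
    rcases Nat.lt_succ_iff_lt_or_eq.1 hj with h | h
    exacts [Or.inr ⟨j, h, rfl⟩, Or.inl (congrArg f (Fin.ext h))]
  · rintro (rfl | ⟨j, hj, rfl⟩)
    exacts [⟨i, i.val.lt_succ_self, rfl⟩, ⟨j, hj.trans i.val.lt_succ_self, rfl⟩]

theorem prefixSet_mono : Monotone (prefixSet m f) := by
  rintro i j hij e ⟨k, hk, rfl⟩
  exact ⟨k, hk.trans_le hij, rfl⟩

theorem spn_prefixSet_mono : Monotone (fun i => spn (prefixSet m f i)) :=
  fun _ _ hij => span_mono (prefixSet_mono f hij)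

variable {f}

theorem oneEq_notMem_spn_prefixSet (hf : ∀ i : Fin m, f i + oneEq n ∉ spn (prefixSet m f i)) :
    ∀ j ≤ m, oneEq n ∉ spn (prefixSet m f j)
  | 0, _ => by
    rw [prefixSet_zero, spn, span_empty, mem_bot]
    exact fun h => one_ne_zero (congrArg Prod.snd h)
  | j + 1, hj => by
    rw [show j + 1 = (⟨j, hj⟩ : Fin m) + 1 from rfl, prefixSet_succ, oneEq_mem_spn_insert_iff]
    exact not_or.2 ⟨oneEq_notMem_spn_prefixSet hf j (by omega), hf ⟨j, hj⟩⟩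

end Trail

section Levels

variable {m : ℕ} {R : Fin m → Option (Clause n)}

theorem levelOf_mono {i j : Fin m} (h : i ≤ j) : levelOf m R i ≤ levelOf m R j :=
  Finset.card_le_card fun _ hk => by
    simp only [Finset.mem_filter] at hk ⊢
    exact ⟨hk.1, hk.2.1.trans h, hk.2.2⟩

theorem levelOf_lt_levelOf {i j : Fin m} (hij : i < j) (hj : R j = none) :
    levelOf m R i < levelOf m R j := by
  refine Finset.card_lt_card ((Finset.ssubset_iff_of_subset fun k hk => ?_).2 ⟨j, ?_, ?_⟩)
  · simp only [Finset.mem_filter] at hk ⊢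
    exact ⟨hk.1, hk.2.1.trans hij.le, hk.2.2⟩
  · simp [hj]
  · simp [hij.not_ge]

theorem levelOf_pos {i : Fin m} (hi : R i = none) : 0 < levelOf m R i :=
  Finset.card_pos.2 ⟨i, by simp [hi]⟩

theorem levelOf_le_totalDecs (i : Fin m) : levelOf m R i ≤ totalDecs m R :=
  Finset.card_le_card fun _ hk => by
    simp only [Finset.mem_filter] at hk ⊢
    exact ⟨hk.1, hk.2.2⟩

theorem totalDecs_pos (h : ∃ i, R i = none) : 0 < totalDecs m R :=
  let ⟨i, hi⟩ := h
  (levelOf_pos hi).trans_le (levelOf_le_totalDecs i)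

theorem levelPrefixSet_levelOf_sub_one (f : Fin m → Eqn n) {i : Fin m} (hi : R i = none) :
    levelPrefixSet m f R (levelOf m R i - 1) = prefixSet m f i := by
  have key : ∀ j : Fin m, levelOf m R j ≤ levelOf m R i - 1 ↔ (j : ℕ) < i := fun j => by
    refine ⟨fun hj => ?_, fun hj => ?_⟩
    · by_contra! hij
      have := levelOf_mono (R := R) (Fin.le_def.2 hij)
      have := levelOf_pos hi
      omega
    · have := levelOf_lt_levelOf (Fin.lt_def.2 hj) hi
      omega
  ext e
  simp only [levelPrefixSet, prefixSet, Set.mem_ofPred_eq, key]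

end Levels

section UnitPropagation

theorem canDeduce_add_oneEq {U : Set (Eqn n)} {C : Clause n} {a : Eqn n}
    (hC : linneg C ≤ spn (insert a U)) (hCU : ¬ linneg C ≤ spn U)
    (ha : a + oneEq n ∉ spn U) : CanDeduce U C (a + oneEq n) := by
  have haU : a ∉ spn U := fun haU => hCU (hC.trans (spn_insert_le haU le_rfl))
  refine ⟨hCU, ?_, ha, ?_⟩ <;> rwa [add_assoc, ZModModule.add_self, add_zero]

variable {Δ : Set (Clause n)}

theorem ConflictLike.head {V V₁ : Set (Eqn n)} (hs : UPStep Δ V V₁)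
    (h : ConflictLike Δ V₁) : ConflictLike Δ V :=
  let ⟨W, hW, h1⟩ := h
  ⟨W, .head hs hW, h1⟩

theorem conflictLike_of_linneg_le {V : Set (Eqn n)} {C : Clause n} (hCΔ : C ∈ Δ)
    (hC : linneg C ≤ spn V) (h1 : oneEq n ∉ spn V) : ConflictLike Δ V :=
  ⟨_, .single ⟨consistent_of_oneEq_notMem_spn h1, C, hCΔ, .inl ⟨hC, rfl⟩⟩,
    Set.mem_insert _ _⟩

/-- Each propagation step from `V` is redundant from `V'`, can be replayed from `V'`, or
already yields `𝟏` there. -/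
theorem ConflictLike.of_spn_le {V V' : Set (Eqn n)} (h : ConflictLike Δ V)
    (hle : spn V ≤ spn V') (h1 : oneEq n ∉ spn V') : ConflictLike Δ V' := by
  obtain ⟨W, hrun, hW⟩ := h
  induction hrun using Relation.ReflTransGen.head_induction_on generalizing V' with
  | refl => exact absurd (hle (subset_span hW)) h1
  | head hs _ ih =>
    obtain ⟨-, C, hCΔ, ⟨hC, rfl⟩ | ⟨e, ⟨-, hCe, -, -⟩, rfl⟩⟩ := hs
    · exact conflictLike_of_linneg_le hCΔ (hC.trans hle) h1
    by_cases hCV' : linneg C ≤ spn V'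
    · exact conflictLike_of_linneg_le hCΔ hCV' h1
    by_cases heV' : e ∈ spn V'
    · exact ih (spn_insert_le heV' hle) h1
    have hCe' := hCe.trans (spn_insert_le_spn_insert hle)
    have he1 : e + oneEq n ∉ spn V' := fun he1 => hCV' (hCe'.trans (spn_insert_le he1 le_rfl))
    refine ConflictLike.head ⟨consistent_of_oneEq_notMem_spn h1, C, hCΔ,
      .inr ⟨e, ⟨hCV', hCe', heV', he1⟩, rfl⟩⟩ (ih (spn_insert_le_spn_insert hle) ?_)
    rw [oneEq_mem_spn_insert_iff]
    exact not_or.2 ⟨h1, he1⟩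

end UnitPropagation

section Resolution

variable {U : Set (Eqn n)} {a g h : Eqn n} {C D D₀ C₀ R₀ : Clause n}

theorem add_oneEq_add_add_oneEq (x y : Eqn n) : x + oneEq n + (y + oneEq n) = x + y := by
  rw [add_comm y, ZModModule.add_add_add_cancel]

/-- Isolating the critical unit `a` in `D`: each equation `e ∈ D` with `e + 𝟏 ∉ span U`
is replaced by `e + (g + 𝟏)`, which moves it into `span U` without changing `⟨D⟩`. -/
theorem exists_linneg_insert_eq (hD : linneg D ≤ spn (insert a U))
    (hDU : ¬ linneg D ≤ spn U) :
    ∃ (g : Eqn n) (D₀ : Clause n), linneg (insert g D₀) = linneg D ∧ linneg D₀ ≤ spn U := by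
  classical
  obtain ⟨g, hgD, hgU⟩ : ∃ g ∈ D, g + oneEq n ∉ spn U := by
    simpa [linneg_le_iff] using hDU
  have hsplit : ∀ e ∈ D, e + oneEq n ∉ spn U → e + oneEq n + a ∈ spn U := fun e he =>
    (mem_span_insert_iff.1 (hD (add_oneEq_mem_linneg he))).resolve_left
  let φ : Eqn n → Eqn n := fun e => if e + oneEq n ∈ spn U then e else e + (g + oneEq n)
  have hφ : ∀ e, φ e + oneEq n =
      if e + oneEq n ∈ spn U then e + oneEq n else e + oneEq n + (g + oneEq n) := fun e => by
    simp only [φ]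
    split_ifs <;> abel
  refine ⟨g, D.image φ, le_antisymm ?_ ?_, ?_⟩
  · refine linneg_insert_le_iff.2 ⟨add_oneEq_mem_linneg hgD, linneg_le_iff.2 ?_⟩
    simp only [Finset.forall_mem_image, hφ]
    intro e he
    split_ifs
    exacts [add_oneEq_mem_linneg he,
      add_mem (add_oneEq_mem_linneg he) (add_oneEq_mem_linneg hgD)]
  · refine linneg_le_iff.2 fun e he => ?_
    have hg := add_oneEq_mem_linneg (Finset.mem_insert_self g (D.image φ))
    have hφe :=
      add_oneEq_mem_linneg (Finset.mem_insert_of_mem (b := g) (Finset.mem_image_of_mem φ he))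
    rw [hφ] at hφe
    split_ifs at hφe
    exacts [hφe, (Submodule.add_mem_iff_left _ hg).1 hφe]
  · simp only [linneg_le_iff, Finset.forall_mem_image, hφ]
    intro e he
    split_ifs with heU
    exacts [heU, add_mem_of_add_mem_of_add_mem (hsplit e he heU) (hsplit g hgD hgU)]

theorem add_oneEq_notMem_of_linneg_insert_eq (hD : linneg (insert g D₀) = linneg D)
    (hD₀ : linneg D₀ ≤ spn U) (hDU : ¬ linneg D ≤ spn U) : g + oneEq n ∉ spn U :=
  fun hg => hDU (hD ▸ linneg_insert_le_iff.2 ⟨hg, hD₀⟩)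

theorem add_oneEq_add_mem_of_linneg_insert_eq (hD : linneg (insert g D₀) = linneg D)
    (hD₀ : linneg D₀ ≤ spn U) (hDU : ¬ linneg D ≤ spn U)
    (hDa : linneg D ≤ spn (insert a U)) : g + oneEq n + a ∈ spn U :=
  have hg := hD ▸ add_oneEq_mem_linneg (Finset.mem_insert_self g D₀)
  (mem_span_insert_iff.1 (hDa hg)).resolve_left (add_oneEq_notMem_of_linneg_insert_eq hD hD₀ hDU)

theorem linneg_resolvent_le {Ci : Clause n}
    (hC : linneg C ≤ spn (insert a U)) (hCU : ¬ linneg C ≤ spn U)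
    (hg : linneg (insert g C₀) = linneg C) (hC₀ : linneg C₀ ≤ spn U)
    (hCi : linneg Ci ≤ spn (insert (a + oneEq n) U)) (hCiU : ¬ linneg Ci ≤ spn U)
    (hh : linneg (insert h R₀) = linneg Ci) (hR₀ : linneg R₀ ≤ spn U) :
    linneg (insert (g + h) (C₀ ∪ R₀)) ≤ spn U := by
  have hga := add_oneEq_add_mem_of_linneg_insert_eq hg hC₀ hCU hC
  have hha := add_oneEq_add_mem_of_linneg_insert_eq hh hR₀ hCiU hCi
  rw [add_oneEq_add_add_oneEq] at hha
  rw [linneg_insert_le_iff, linneg_union, sup_le_iff, add_right_comm]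
  exact ⟨add_mem_of_add_mem_of_add_mem hga hha, hC₀, hR₀⟩

theorem linneg_le_spn_insert_linneg (b : Eqn n) (D : Clause n) :
    linneg D ≤ spn (insert b (linneg D : Set (Eqn n))) :=
  (spn_linneg D).ge.trans (span_mono (Set.subset_insert _ _))

theorem linneg_insert_le_spn_insert_resolvent_left (g h : Eqn n) (C₀ R₀ : Clause n) :
    linneg (insert g C₀) ≤
      spn (insert h (linneg (insert (g + h) (C₀ ∪ R₀)) : Set (Eqn n))) := by
  have hC' := linneg_le_spn_insert_linneg h (insert (g + h) (C₀ ∪ R₀))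
  have hh : h ∈ spn (insert h (linneg (insert (g + h) (C₀ ∪ R₀)) : Set (Eqn n))) :=
    subset_span (Set.mem_insert _ _)
  refine linneg_insert_le_iff.2 ⟨(Submodule.add_mem_iff_left _ hh).1 ?_, ?_⟩
  · rw [add_right_comm]
    exact hC' (add_oneEq_mem_linneg (Finset.mem_insert_self _ _))
  · exact (linneg_mono (Finset.subset_union_left.trans (Finset.subset_insert _ _))).trans hC'

theorem linneg_insert_le_spn_insert_resolvent_right (g h : Eqn n) (C₀ R₀ : Clause n) :
    linneg (insert h R₀) ≤
      spn (insert (h + oneEq n) (linneg (insert (g + h) (C₀ ∪ R₀)) : Set (Eqn n))) := by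
  have hC' := linneg_le_spn_insert_linneg (h + oneEq n) (insert (g + h) (C₀ ∪ R₀))
  refine linneg_insert_le_iff.2 ⟨subset_span (Set.mem_insert _ _), ?_⟩
  exact (linneg_mono (Finset.subset_union_right.trans (Finset.subset_insert _ _))).trans hC'

end Resolution

section Learning

variable {m : ℕ} {f : Fin m → Eqn n} {R : Fin m → Option (Clause n)} {C C' : Clause n}

theorem LearnStep.exists_not_le_and_le
    (hreason : ∀ (i : Fin m) (Ci : Clause n), R i = some Ci →
      CanDeduce (prefixSet m f i) Ci (f i))
    (hs : LearnStep m f R C C') :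
    ∃ i : Fin m,
      ¬ linneg C ≤ spn (prefixSet m f i) ∧ linneg C' ≤ spn (prefixSet m f i) := by
  obtain ⟨-, i, Ci, hRi, hC, hCU, C₀, R₀, g, h, hg, hC₀, hh, hR₀, rfl⟩ := hs
  obtain ⟨hCiU, hCi, -, -⟩ := hreason i Ci hRi
  rw [prefixSet_succ] at hC
  exact ⟨i, hCU, linneg_resolvent_le hC hCU hg hC₀ hCi hCiU hh hR₀⟩

theorem not_forall_learnStep
    (hreason : ∀ (i : Fin m) (Ci : Clause n), R i = some Ci →
      CanDeduce (prefixSet m f i) Ci (f i))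
    (c : ℕ → Clause n) : ¬ ∀ t, LearnStep m f R (c t) (c (t + 1)) := by
  intro hc
  choose i hnle hle using fun t => (hc t).exists_not_le_and_le hreason
  obtain ⟨t, ht⟩ := WellFounded.not_rel_apply_succ (r := (· < ·)) fun t => (i t : ℕ)
  refine ht (lt_of_not_ge fun hit => hnle (t + 1) ?_)
  exact (hle t).trans (spn_prefixSet_mono f hit)

theorem ConflictCl.learnStep {Rbot : Clause n}
    (hreason : ∀ (i : Fin m) (Ci : Clause n), R i = some Ci →
      CanDeduce (prefixSet m f i) Ci (f i))
    (hone : ∀ j ≤ m, oneEq n ∉ spn (prefixSet m f j))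
    (hC : ConflictCl m f R Rbot C) (hs : LearnStep m f R C C') : ConflictCl m f R Rbot C' := by
  obtain ⟨-, i, Ci, hRi, hCa, hCU, C₀, R₀, g, h, hg, hC₀, hh, hR₀, rfl⟩ := hs
  obtain ⟨hCiU, hCi, hfi, -⟩ := hreason i Ci hRi
  rw [prefixSet_succ] at hCa
  set P := spn (prefixSet m f i)
  set U₀ : Set (Eqn n) := (linneg (insert (g + h) (C₀ ∪ R₀)) : Set (Eqn n))
  have hU₀ : spn U₀ ≤ P :=
    (spn_linneg _).le.trans (linneg_resolvent_le hCa hCU hg hC₀ hCi hCiU hh hR₀)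
  have hh1 : h + oneEq n ∉ P := add_oneEq_notMem_of_linneg_insert_eq hh hR₀ hCiU
  have hhf : h + f i ∈ P := by
    simpa only [add_oneEq_add_add_oneEq] using
      add_oneEq_add_mem_of_linneg_insert_eq hh hR₀ hCiU hCi
  have hhP : h ∉ P := fun hhP => hfi ((Submodule.add_mem_iff_right _ hhP).1 hhf)
  have hone₀ : oneEq n ∉ spn U₀ := fun h1 => hone i i.is_lt.le (hU₀ h1)
  have hdeduce : UPStep (reasonSet R Rbot) U₀ (insert h U₀) :=
    ⟨consistent_of_oneEq_notMem_spn hone₀, Ci, .inl ⟨i, hRi⟩, .inr ⟨h,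
      ⟨fun hle => hCiU (hle.trans hU₀),
        hh ▸ linneg_insert_le_spn_insert_resolvent_right g h C₀ R₀,
        fun h' => hhP (hU₀ h'), fun h' => hh1 (hU₀ h')⟩, rfl⟩⟩
  have hone₁ : oneEq n ∉ spn (insert h U₀) := by
    rw [oneEq_mem_spn_insert_iff]
    exact not_or.2 ⟨hone₀, fun h' => hh1 (hU₀ h')⟩
  refine ⟨(spn_linneg _).ge.trans (hU₀.trans (spn_prefixSet_mono f i.is_lt.le)),
    ConflictLike.head hdeduce (hC.2.of_spn_le ?_ hone₁)⟩
  rw [spn_linneg, ← hg]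
  exact linneg_insert_le_spn_insert_resolvent_left g h C₀ R₀

theorem conflictCl_reasonBot {Rbot : Clause n} (hbot : linneg Rbot ≤ spn (prefixSet m f m))
    (hone : oneEq n ∉ spn (prefixSet m f m)) : ConflictCl m f R Rbot Rbot :=
  ⟨hbot, conflictLike_of_linneg_le (.inr rfl) (spn_linneg Rbot).ge
    (fun h1 => hone (hbot ((spn_linneg Rbot).le h1)))⟩

theorem assertingCl_of_le_spn_prefixSet_zero (hdec : ∃ i, R i = none)
    (hC : linneg C ≤ spn (prefixSet m f 0)) : AssertingCl m f R C :=
  ⟨0, totalDecs_pos hdec, .inl (hC.trans (span_mono (by simp [prefixSet_zero])))⟩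

theorem assertingCl_of_decision {i : Fin m} (hi : R i = none)
    (hfi : f i + oneEq n ∉ spn (prefixSet m f i))
    (hC : linneg C ≤ spn (prefixSet m f (i + 1))) (hCU : ¬ linneg C ≤ spn (prefixSet m f i)) :
    AssertingCl m f R C := by
  refine ⟨levelOf m R i - 1, ?_, .inr ⟨f i + oneEq n, ?_⟩⟩
  · have := levelOf_pos hi
    have := levelOf_le_totalDecs (R := R) i
    omega
  · rw [levelPrefixSet_levelOf_sub_one f hi]
    rw [prefixSet_succ] at hC
    exact canDeduce_add_oneEq hC hCU hfi

theorem exists_learnStep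
    (hreason : ∀ (i : Fin m) (Ci : Clause n), R i = some Ci →
      CanDeduce (prefixSet m f i) Ci (f i))
    (hunit : ∀ i : Fin m, f i + oneEq n ∉ spn (prefixSet m f i))
    (hdec : ∃ i, R i = none) (hC : linneg C ≤ spn (prefixSet m f m))
    (hna : ¬ AssertingCl m f R C) : ∃ C', LearnStep m f R C C' := by
  obtain ⟨i, hi, hCU, hCa⟩ :=
    Nat.exists_lt_not_and_succ (p := fun j => linneg C ≤ spn (prefixSet m f j))
      (fun h0 => hna (assertingCl_of_le_spn_prefixSet_zero hdec h0)) hC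
  lift i to Fin m using hi
  cases hR : R i with
  | none => exact absurd (assertingCl_of_decision hR (hunit i) hCa hCU) hna
  | some Ci =>
    obtain ⟨hCiU, hCi, -, -⟩ := hreason i Ci hR
    have hCa' : linneg C ≤ spn (insert (f i) (prefixSet m f i)) := prefixSet_succ f i ▸ hCa
    obtain ⟨g, C₀, hg, hC₀⟩ := exists_linneg_insert_eq hCa' hCU
    obtain ⟨h, R₀, hh, hR₀⟩ := exists_linneg_insert_eq hCi hCiU
    exact ⟨_, hna, i, Ci, hR, hCa, hCU, C₀, R₀, g, h, hg, hC₀, hh, hR₀, rfl⟩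

end Learning

/-- Given a trail `f_1, …, f_m, 𝟏` with reasons
`R_1, …, R_m, R_⊥` (decisions `R i = none`, propagations justified by unit
propagation, the final contradiction justified by `R_⊥`, and at least one
decision), the 1-UIP-like clause learning procedure starting from `R_⊥`
terminates (there is no infinite run of learning steps), is never stuck at a
non-asserting clause, and every asserting clause it can reach is a conflict
clause; i.e. it terminates and outputs an asserting conflict clause. -/
theorem stmt10 {n : ℕ} (m : ℕ) (f : Fin m → Eqn n)
    (R : Fin m → Option (Clause n)) (Rbot : Clause n)
    (hreason : ∀ (i : Fin m) (Ci : Clause n), R i = some Ci →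
      CanDeduce (prefixSet m f (i : ℕ)) Ci (f i))
    (hdecision : ∀ i : Fin m, R i = none →
      f i ∉ spn (prefixSet m f (i : ℕ)) ∧ f i + oneEq n ∉ spn (prefixSet m f (i : ℕ)))
    (hbot : linneg Rbot ≤ spn (prefixSet m f m))
    (hdec : ∃ i : Fin m, R i = none) :
    (¬ ∃ c : ℕ → Clause n, c 0 = Rbot ∧ ∀ t, LearnStep m f R (c t) (c (t + 1))) ∧
    (∀ C : Clause n, Relation.ReflTransGen (LearnStep m f R) Rbot C →
      (¬ AssertingCl m f R C → ∃ C', LearnStep m f R C C') ∧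
      (AssertingCl m f R C → AssertingCl m f R C ∧ ConflictCl m f R Rbot C)) := by
  have hunit : ∀ i : Fin m, f i + oneEq n ∉ spn (prefixSet m f i) := fun i => by
    cases hR : R i with
    | none => exact (hdecision i hR).2
    | some Ci => exact (hreason i Ci hR).2.2.2
  have hone := oneEq_notMem_spn_prefixSet hunit
  have hconflict : ∀ C, Relation.ReflTransGen (LearnStep m f R) Rbot C →
      ConflictCl m f R Rbot C := fun C hC => by
    induction hC with
    | refl => exact conflictCl_reasonBot hbot (hone m le_rfl)
    | tail _ hs ih => exact ih.learnStep hreason hone hs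
  refine ⟨fun ⟨c, _, hc⟩ => not_forall_learnStep hreason c hc, fun C hC => ⟨?_, ?_⟩⟩
  · exact exists_learnStep hreason hunit hdec (hconflict C hC).1
  · exact fun hA => ⟨hA, hconflict C hC⟩

end XorSAT
end

section
/- If a linear clause C has an input Res(⊕) proof from a set of clauses Δ, then ⟨C⟩ is conflict-like with respect to Δ: there is a run of unit propagation starting with units ⟨C⟩ and using the clauses C₀, C₁, …, C_k of the input proof that deduces the contradiction 𝟏, using at most as many propagation steps as the length of the input proof. -/
namespace XorSAT

/-- The addition rule of `Res(⊕)` in subspace form: from `W = span(A, f)` and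
`X = span(B, g)`, derive `Y = span(A, B, f+g+𝟏)`. -/
def AddStepSub {n : ℕ} (W X Y : Submodule (ZMod 2) (Eqn n)) : Prop :=
  ∃ (A B : Set (Eqn n)) (f g : Eqn n),
    W = Submodule.span (ZMod 2) (insert f A) ∧
    X = Submodule.span (ZMod 2) (insert g B) ∧
    Y = Submodule.span (ZMod 2) (A ∪ B ∪ {f + g + oneEq n})

/-- An input `Res(⊕)` proof from `Δ`, in subspace form: a sequence
`V₀ = ⟨C₀⟩, V₁, …, V_k` with each `Cᵢ ∈ Δ`, where `Vᵢ` is obtained from `V_{i-1}`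
and `⟨Cᵢ⟩` by the addition rule.  Its length is `k`. -/
def InputProof {n : ℕ} (Δ : Set (Clause n)) (k : ℕ)
    (Cs : ℕ → Clause n) (V : ℕ → Submodule (ZMod 2) (Eqn n)) : Prop :=
  (∀ i ≤ k, Cs i ∈ Δ) ∧ V 0 = linneg (Cs 0) ∧
  ∀ i < k, AddStepSub (V i) (linneg (Cs (i + 1))) (V (i + 1))

def lmap {n : ℕ} (x : Fin n → ZMod 2) : Eqn n →ₗ[ZMod 2] ZMod 2 where
  toFun e := (∑ i, e.1 i * x i) + e.2
  map_add' a b := by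
    simp only [Prod.fst_add, Prod.snd_add, Pi.add_apply, add_mul, Finset.sum_add_distrib]; ring
  map_smul' c a := by
    simp only [Prod.smul_fst, Prod.smul_snd, Pi.smul_apply, smul_eq_mul, RingHom.id_apply,
      Finset.mul_sum, mul_add, mul_assoc]

lemma addself {n : ℕ} (e : Eqn n) : e + e = 0 := by
  have h : ((1:ZMod 2) + 1) • e = e + e := by rw [add_smul, one_smul]
  have h2 : ((1:ZMod 2) + 1) = 0 := by decide
  rw [h2, zero_smul] at h; exact h.symm

lemma zmodcases (a : ZMod 2) : a = 0 ∨ a = 1 := by revert a; decide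

def bvec {n : ℕ} (i : Fin n) : Eqn n := (Pi.single i 1, 0)

lemma exists_assign {n : ℕ} (p : Submodule (ZMod 2) (Eqn n)) (h : oneEq n ∉ p) :
    ∃ x : Fin n → ZMod 2, ∀ e ∈ p, lmap x e = 0 := by
  obtain ⟨φ, hφ1, hφ0⟩ := p.exists_dual_map_eq_bot_of_notMem h inferInstance
  have hone : φ (oneEq n) = 1 := by
    rcases zmodcases (φ (oneEq n)) with h'|h' <;> simp_all
  refine ⟨fun i => φ (bvec i), fun e he => ?_⟩
  have hz : φ e = 0 := by
    have : φ e ∈ p.map φ := ⟨e, he, rfl⟩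
    rw [hφ0] at this; simpa using this
  have hdecomp : e = (∑ i, e.1 i • bvec i) + e.2 • oneEq n := by
    ext j
    · simp [bvec, oneEq, Prod.fst_sum, Finset.sum_apply, Pi.single_apply,
        Finset.sum_ite_eq, mul_comm]
    · simp [bvec, oneEq, Prod.snd_sum]
  have hcalc : φ e = (∑ i, e.1 i * φ (bvec i)) + e.2 * φ (oneEq n) := by
    conv_lhs => rw [hdecomp]
    rw [map_add, map_sum, map_smul]
    simp only [map_smul, smul_eq_mul]
  rw [hz, hone, mul_one] at hcalc
  simp only [lmap, LinearMap.coe_mk, AddHom.coe_mk]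
  exact hcalc.symm

lemma consistent_of {n : ℕ} (U : Set (Eqn n)) (h : oneEq n ∉ spn U) : Consistent U := by
  obtain ⟨x, hx⟩ := exists_assign (spn U) h
  refine ⟨x, fun e he => ?_⟩
  have := hx e (Submodule.subset_span he)
  simp only [lmap, LinearMap.coe_mk, AddHom.coe_mk] at this
  have hz : ∀ a b : ZMod 2, a + b = 0 → a = b := by decide
  exact hz _ _ this

lemma aux {n : ℕ} (Δ' : Set (Clause n)) (Cs : ℕ → Clause n)
    (V : ℕ → Submodule (ZMod 2) (Eqn n)) (h0 : V 0 = linneg (Cs 0)) :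
    ∀ m, (∀ i ≤ m, Cs i ∈ Δ') →
    (∀ i < m, AddStepSub (V i) (linneg (Cs (i + 1))) (V (i + 1))) →
    ∀ U : Set (Eqn n), V m ≤ spn U → oneEq n ∉ spn U →
    ∃ t ≤ m, ∃ u : ℕ → Set (Eqn n), u 0 = U ∧
      (∀ i < t, UPStep Δ' (u i) (u (i + 1)) ∧ oneEq n ∉ u (i + 1)) ∧
      UPStep Δ' (u t) (u (t + 1)) ∧ oneEq n ∈ u (t + 1) := by
  intro m
  induction m with
  | zero =>
    intro h1 _ U hU hone
    refine ⟨0, le_refl 0, fun i => Nat.casesOn i U (fun _ => insert (oneEq n) U), rfl,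
      fun i hi => absurd hi (Nat.not_lt_zero i), ?_, Set.mem_insert _ _⟩
    exact ⟨consistent_of U hone, Cs 0, h1 0 le_rfl, Or.inl ⟨h0 ▸ hU, rfl⟩⟩
  | succ m ih =>
    intro h1 h2 U hU hone
    obtain ⟨A, B, f, g, hVm, hC, hV1⟩ := h2 m (Nat.lt_succ_self m)
    by_cases hcase : linneg (Cs (m + 1)) ≤ spn U
    · refine ⟨0, Nat.zero_le _, fun i => Nat.casesOn i U (fun _ => insert (oneEq n) U), rfl,
        fun i hi => absurd hi (Nat.not_lt_zero i), ?_, Set.mem_insert _ _⟩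
      exact ⟨consistent_of U hone, Cs (m + 1), h1 (m + 1) le_rfl, Or.inl ⟨hcase, rfl⟩⟩
    · have hV1' : (A ∪ B ∪ {f + g + oneEq n} : Set (Eqn n)) ⊆ ↑(spn U) := by
        intro z hz
        exact hU (hV1 ▸ Submodule.subset_span hz)
      have hBU : B ⊆ ↑(spn U) := fun b hb =>
        hV1' (Set.mem_union_left _ (Set.mem_union_right _ hb))
      have hAU : A ⊆ ↑(spn U) := fun a ha =>
        hV1' (Set.mem_union_left _ (Set.mem_union_left _ ha))
      have hfg : f + g + oneEq n ∈ spn U :=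
        hV1' (Set.mem_union_right _ rfl)
      have hg : g ∉ spn U := by
        intro hgU
        apply hcase
        rw [hC]
        apply Submodule.span_le.mpr
        intro z hz
        rcases Set.mem_insert_iff.mp hz with h' | h'
        · exact h' ▸ hgU
        · exact hBU h'
      have hgg : g + oneEq n + oneEq n = g := by
        rw [add_assoc, addself, add_zero]
      have hfkey : f + g + oneEq n + (g + oneEq n) = f := by
        have h' : f + g + oneEq n + (g + oneEq n)
            = f + ((g + g) + (oneEq n + oneEq n)) := by abel
        rw [h', addself, addself, add_zero, add_zero]
      by_cases hg1 : g + oneEq n ∈ spn U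
      · -- V m already in spn U, use IH directly
        have hVmU : V m ≤ spn U := by
          rw [hVm]
          apply Submodule.span_le.mpr
          intro z hz
          rcases Set.mem_insert_iff.mp hz with h' | h'
          · subst h'
            exact hfkey ▸ Submodule.add_mem _ hfg hg1
          · exact hAU h'
        obtain ⟨t, ht, u, hu0, hsteps, hconf, hmem⟩ :=
          ih (fun i hi => h1 i (hi.trans (Nat.le_succ m)))
            (fun i hi => h2 i (hi.trans (Nat.lt_succ_self m))) U hVmU hone
        exact ⟨t, ht.trans (Nat.le_succ m), u, hu0, hsteps, hconf, hmem⟩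
      · -- deduce g + 𝟏 with clause Cs (m+1)
        set U' : Set (Eqn n) := insert (g + oneEq n) U with hU'def
        have hspnle : spn U ≤ spn U' := Submodule.span_mono (Set.subset_insert _ _)
        have hg1' : g + oneEq n ∈ spn U' := Submodule.subset_span (Set.mem_insert _ _)
        have hone' : oneEq n ∉ spn U' := by
          intro hm
          rw [hU'def] at hm
          obtain ⟨a, z, hzU, heq⟩ := Submodule.mem_span_insert.mp hm
          rcases zmodcases a with ha | ha
          · rw [ha, zero_smul, zero_add] at heq
            exact hone (heq ▸ hzU)
          · rw [ha, one_smul] at heq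
            have hgz : g = z := by
              have h2' : g + oneEq n + oneEq n = g + oneEq n + (g + oneEq n + z) :=
                congrArg (fun w => g + oneEq n + w) heq
              rw [hgg, ← add_assoc, addself, zero_add] at h2'
              exact h2'
            exact hg (hgz ▸ hzU)
        have hdeduce : CanDeduce U (Cs (m + 1)) (g + oneEq n) := by
          refine ⟨hcase, ?_, hg1, ?_⟩
          · rw [hgg, hC]
            apply Submodule.span_le.mpr
            intro z hz
            rcases Set.mem_insert_iff.mp hz with h' | h'
            · exact h' ▸ Submodule.subset_span (Set.mem_insert _ _)
            · exact Submodule.span_mono (Set.subset_insert _ _) (hBU h')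
          · rw [hgg]; exact hg
        have hstep : UPStep Δ' U U' :=
          ⟨consistent_of U hone, Cs (m + 1), h1 (m + 1) le_rfl,
            Or.inr ⟨g + oneEq n, hdeduce, rfl⟩⟩
        have honeU' : oneEq n ∉ U' := fun h' => hone' (Submodule.subset_span h')
        have hVmU' : V m ≤ spn U' := by
          rw [hVm]
          apply Submodule.span_le.mpr
          intro z hz
          rcases Set.mem_insert_iff.mp hz with h' | h'
          · subst h'
            exact hfkey ▸ Submodule.add_mem _ (hspnle hfg) hg1'
          · exact hspnle (hAU h')
        obtain ⟨t, ht, u', hu0, hsteps, hconf, hmem⟩ :=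
          ih (fun i hi => h1 i (hi.trans (Nat.le_succ m)))
            (fun i hi => h2 i (hi.trans (Nat.lt_succ_self m))) U' hVmU' hone'
        refine ⟨t + 1, Nat.succ_le_succ ht, fun i => Nat.casesOn i U u', rfl, ?_, hconf, hmem⟩
        intro i hi
        cases i with
        | zero =>
          constructor
          · show UPStep Δ' U (u' 0)
            rw [hu0]; exact hstep
          · show oneEq n ∉ u' 0
            rw [hu0]; exact honeU'
        | succ j => exact hsteps j (Nat.lt_of_succ_lt_succ hi)

/-- If a clause `C` has an input `Res(⊕)` proof of length `k`
from `Δ`, then `⟨C⟩` is conflict-like w.r.t. the clauses `C₀, …, C_k` of the input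
proof: there is a run of unit propagation starting with units `⟨C⟩`, using the
clauses of the input proof, that makes at most `k` propagation steps that deduce
equations and then deduces the contradiction `𝟏`. -/
theorem stmt11 {n : ℕ} (Δ : Set (Clause n)) (C : Clause n) (hC : NonTaut C)
    (k : ℕ) (Cs : ℕ → Clause n) (V : ℕ → Submodule (ZMod 2) (Eqn n))
    (hproof : InputProof Δ k Cs V)
    (hlines : ∀ i ≤ k, oneEq n ∉ V i)
    (hlast : V k = linneg C) :
    ∃ t ≤ k, ∃ u : ℕ → Set (Eqn n),
      u 0 = (linneg C : Set (Eqn n)) ∧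
      (∀ i < t, UPStep {D | ∃ i ≤ k, D = Cs i} (u i) (u (i + 1)) ∧ oneEq n ∉ u (i + 1)) ∧
      UPStep {D | ∃ i ≤ k, D = Cs i} (u t) (u (t + 1)) ∧ oneEq n ∈ u (t + 1) := by
  obtain ⟨h1, h0, h2⟩ := hproof
  have hspn : spn ((linneg C : Set (Eqn n))) = linneg C := Submodule.span_eq _
  have hone : oneEq n ∉ spn ((linneg C : Set (Eqn n))) := by
    rw [hspn, ← hlast]; exact hlines k le_rfl
  have hle : V k ≤ spn ((linneg C : Set (Eqn n))) := by
    rw [hspn, ← hlast]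
  obtain ⟨t, ht, u, hu0, hsteps, hconf, hmem⟩ :=
    aux {D | ∃ i ≤ k, D = Cs i} Cs V h0 k (fun i hi => ⟨i, hi, rfl⟩) h2 _ hle hone
  exact ⟨t, ht, u, hu0, hsteps, hconf, hmem⟩

end XorSAT
end

section
/- If ⟨C⟩ is conflict-like with respect to a set of clauses Δ, witnessed by a run of unit propagation with t propagation steps, then there exists a clause C' with ⟨C'⟩ ⊆ ⟨C⟩ that has an input Res(⊕) proof from Δ whose number of addition steps is at most t. -/
namespace XorSAT

variable {n : ℕ}

lemma add_self' (v : Eqn n) : v + v = 0 := by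
  have h : v + v = ((1 : ZMod 2) + 1) • v := by rw [add_smul, one_smul]
  rw [h, show (1 : ZMod 2) + 1 = 0 by decide, zero_smul]

def satSub (x : Fin n → ZMod 2) : Submodule (ZMod 2) (Eqn n) where
  carrier := {e | Sats x e}
  zero_mem' := by simp [Sats]
  add_mem' := by
    intro a b ha hb
    simp only [Set.mem_setOf_eq, Sats] at *
    simp only [Prod.fst_add, Prod.snd_add, Pi.add_apply, add_mul,
      Finset.sum_add_distrib, ha, hb]
  smul_mem' := by
    intro c e he
    simp only [Set.mem_setOf_eq, Sats] at *
    simp only [Prod.smul_fst, Prod.smul_snd, Pi.smul_apply, smul_eq_mul, mul_assoc,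
      ← Finset.mul_sum, he]

lemma one_not_mem_linneg {C : Clause n} (hC : NonTaut C) : oneEq n ∉ linneg C := by
  obtain ⟨x, hx⟩ := hC
  have hle : linneg C ≤ satSub x := by
    rw [linneg, Submodule.span_le]
    rintro _ ⟨e, he, rfl⟩
    have hne : ¬ Sats x e := hx e he
    show Sats x (e + oneEq n)
    simp only [Sats, oneEq, Prod.fst_add, Prod.snd_add, Pi.add_apply, Pi.zero_apply,
      add_zero] at *
    exact (show ∀ s b : ZMod 2, ¬ s = b → s = b + 1 by decide) _ _ hne
  intro h
  have : Sats x (oneEq n) := hle h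
  simp [Sats, oneEq] at this

lemma slice {P Y : Submodule (ZMod 2) (Eqn n)} {v : Eqn n}
    (hY : Y ≤ P ⊔ Submodule.span (ZMod 2) {v}) {y : Eqn n} (hyY : y ∈ Y) (hyP : y ∉ P) :
    y + v ∈ P ∧
      Y = Submodule.span (ZMod 2) (insert y ((Y ⊓ P : Submodule (ZMod 2) (Eqn n)) : Set (Eqn n))) := by
  have key : ∀ z ∈ Y, z ∈ P ∨ z + v ∈ P := by
    intro z hz
    obtain ⟨p, hp, q, hq, rfl⟩ := Submodule.mem_sup.1 (hY hz)
    rw [Submodule.mem_span_singleton] at hq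
    obtain ⟨c, rfl⟩ := hq
    rcases (show ∀ c : ZMod 2, c = 0 ∨ c = 1 from by decide) c with rfl | rfl
    · left; simpa using hp
    · right
      have h1 : p + (1 : ZMod 2) • v + v = p + (v + v) := by
        rw [one_smul, add_assoc]
      rw [h1, add_self', add_zero]; exact hp
  have hyv : y + v ∈ P := (key y hyY).resolve_left hyP
  refine ⟨hyv, le_antisymm ?_ ?_⟩
  · intro z hz
    rcases key z hz with h | h
    · exact Submodule.subset_span (Set.mem_insert_of_mem _ (by exact ⟨hz, h⟩))
    · have hzy : z + y ∈ Y ⊓ P := by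
        refine ⟨Y.add_mem hz hyY, ?_⟩
        have : z + y = (z + v) + (y + v) := by
          have : (z + v) + (y + v) = (z + y) + (v + v) := by abel
          rw [this, add_self', add_zero]
        rw [this]; exact P.add_mem h hyv
      have h1 : z + y ∈ Submodule.span (ZMod 2) (insert y ((Y ⊓ P : Submodule (ZMod 2) (Eqn n)) : Set (Eqn n))) :=
        Submodule.subset_span (Set.mem_insert_of_mem _ hzy)
      have h2 : y ∈ Submodule.span (ZMod 2) (insert y ((Y ⊓ P : Submodule (ZMod 2) (Eqn n)) : Set (Eqn n))) :=
        Submodule.subset_span (Set.mem_insert _ _)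
      have : z = (z + y) + y := by rw [add_assoc, add_self', add_zero]
      rw [this]; exact Submodule.add_mem _ h1 h2
  · rw [Submodule.span_le]
    rintro z hz
    rcases Set.mem_insert_iff.1 hz with rfl | hz
    · exact hyY
    · simp only [SetLike.mem_coe] at hz
      exact hz.1


lemma extend {Δ : Set (Clause n)} {k : ℕ} {Cs : ℕ → Clause n}
    {V : ℕ → Submodule (ZMod 2) (Eqn n)} (h : InputProof Δ k Cs V)
    {D : Clause n} (hD : D ∈ Δ) {Y : Submodule (ZMod 2) (Eqn n)}
    (hstep : AddStepSub (V k) (linneg D) Y) :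
    InputProof Δ (k + 1) (fun j => if j ≤ k then Cs j else D)
      (fun j => if j ≤ k then V j else Y) := by
  obtain ⟨hmem, h0, hadd⟩ := h
  refine ⟨?_, ?_, ?_⟩
  · intro i hi
    by_cases hik : i ≤ k
    · simpa [hik] using hmem i hik
    · simpa [hik] using hD
  · simp only [Nat.zero_le, if_pos]
    exact h0
  · intro i hi
    rcases Nat.lt_succ_iff_lt_or_eq.1 hi with hik | rfl
    · have h1 : i ≤ k := le_of_lt hik
      have h2 : i + 1 ≤ k := hik
      simpa [h1, h2] using hadd i hik
    · have h1 : i ≤ i := le_refl i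
      have h2 : ¬ i + 1 ≤ i := by omega
      simpa [h1, h2] using hstep

lemma main_aux (Δ : Set (Clause n)) (u : ℕ → Set (Eqn n)) (m : ℕ)
    (hstep : ∀ i < m, ∃ D ∈ Δ, ∃ f, CanDeduce (u i) D f ∧ u (i + 1) = insert f (u i))
    (Dm : Clause n) (hDm : Dm ∈ Δ) (hDle : linneg Dm ≤ spn (u m)) :
    ∀ d i, i + d = m → ∃ k ≤ d, ∃ (Cs : ℕ → Clause n)
      (V : ℕ → Submodule (ZMod 2) (Eqn n)),
      InputProof Δ k Cs V ∧ V k ≤ spn (u i) := by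
  intro d
  induction d with
  | zero =>
    intro i hi
    refine ⟨0, le_refl 0, fun _ => Dm, fun _ => linneg Dm, ⟨?_, rfl, ?_⟩, ?_⟩
    · intro j hj; exact hDm
    · intro j hj; omega
    · simpa [← hi] using hDle
  | succ d ih =>
    intro i hi
    obtain ⟨k, hk, Cs, V, hproof, hVk⟩ := ih (i + 1) (by omega)
    obtain ⟨D, hDΔ, f, hCD, hins⟩ := hstep i (by omega)
    rw [hins] at hVk
    by_cases hle : V k ≤ spn (u i)
    · exact ⟨k, by omega, Cs, V, hproof, hle⟩
    · set P := spn (u i) with hP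
      have hVk' : V k ≤ P ⊔ Submodule.span (ZMod 2) {f} := by
        have : spn (insert f (u i)) = Submodule.span (ZMod 2) {f} ⊔ P := by
          rw [hP, spn, spn, Submodule.span_insert]
        rw [this, sup_comm] at hVk
        exact hVk
      obtain ⟨y, hyV, hyP⟩ := SetLike.not_le_iff_exists.1 hle
      obtain ⟨hyf, hYeq⟩ := slice hVk' hyV hyP
      obtain ⟨hnle, hle2, -, -⟩ := hCD
      have hD' : linneg D ≤ P ⊔ Submodule.span (ZMod 2) {f + oneEq n} := by
        have : spn (insert (f + oneEq n) (u i))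
            = Submodule.span (ZMod 2) {f + oneEq n} ⊔ P := by
          rw [hP, spn, spn, Submodule.span_insert]
        rw [this, sup_comm] at hle2
        exact hle2
      obtain ⟨g, hgD, hgP⟩ := SetLike.not_le_iff_exists.1 hnle
      obtain ⟨hgf, hDeq⟩ := slice hD' hgD hgP
      set A : Set (Eqn n) := ((V k ⊓ P : Submodule (ZMod 2) (Eqn n)) : Set (Eqn n))
      set B : Set (Eqn n) := ((linneg D ⊓ P : Submodule (ZMod 2) (Eqn n)) : Set (Eqn n))
      set Y : Submodule (ZMod 2) (Eqn n) :=
        Submodule.span (ZMod 2) (A ∪ B ∪ {y + g + oneEq n}) with hYdef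
      have hAS : AddStepSub (V k) (linneg D) Y := ⟨A, B, y, g, hYeq, hDeq, rfl⟩
      have hYP : Y ≤ P := by
        rw [hYdef, Submodule.span_le]
        rintro z hz
        rcases hz with (hz | hz) | hz
        · simp only [A, SetLike.mem_coe] at hz
          exact hz.2
        · simp only [B, SetLike.mem_coe] at hz
          exact hz.2
        · rcases hz with rfl
          have heq : y + g + oneEq n = (y + f) + (g + (f + oneEq n)) := by
            have h1 : (y + f) + (g + (f + oneEq n)) = (y + g + oneEq n) + (f + f) := by
              abel
            rw [h1, add_self', add_zero]
          rw [heq]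
          exact P.add_mem hyf hgf
      refine ⟨k + 1, by omega, _, _, extend hproof hDΔ hAS, ?_⟩
      simpa using hYP


/-- If `⟨C⟩` is conflict-like w.r.t. `Δ`, witnessed by a run of
unit propagation with `t` propagation steps, then some clause `C'` with
`⟨C'⟩ ⊆ ⟨C⟩` has an input `Res(⊕)` proof from `Δ` with at most `t` additions. -/
theorem stmt12 {n : ℕ} (Δ : Set (Clause n)) (C : Clause n) (hC : NonTaut C)
    (t : ℕ) (u : ℕ → Set (Eqn n))
    (h0 : u 0 = (linneg C : Set (Eqn n)))
    (hrun : ∀ i < t, UPStep Δ (u i) (u (i + 1)))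
    (hone : oneEq n ∈ u t) :
    ∃ k ≤ t, ∃ (Cs : ℕ → Clause n) (V : ℕ → Submodule (ZMod 2) (Eqn n)),
      InputProof Δ k Cs V ∧
      ∃ C' : Clause n, linneg C' = V k ∧ linneg C' ≤ linneg C := by
  classical
  have hex : ∃ j, oneEq n ∈ u j := ⟨t, hone⟩
  set j := Nat.find hex with hj
  have hjmem : oneEq n ∈ u j := Nat.find_spec hex
  have hjle : j ≤ t := Nat.find_le hone
  have hjpos : 0 < j := by
    by_contra h
    push_neg at h
    interval_cases j
    rw [h0] at hjmem
    exact one_not_mem_linneg hC hjmem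
  set m := j - 1 with hm
  have hjm : j = m + 1 := by omega
  have hmt : m < t := by omega
  -- steps before m are deductions
  have hstep : ∀ i < m, ∃ D ∈ Δ, ∃ f, CanDeduce (u i) D f ∧ u (i + 1) = insert f (u i) := by
    intro i him
    obtain ⟨-, D, hDΔ, hcase⟩ := hrun i (by omega)
    rcases hcase with ⟨-, heq⟩ | ⟨f, hCD, heq⟩
    · exfalso
      have : oneEq n ∈ u (i + 1) := by rw [heq]; exact Set.mem_insert _ _
      exact Nat.find_min hex (by omega) this
    · exact ⟨D, hDΔ, f, hCD, heq⟩
  -- step m is a conflict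
  obtain ⟨-, Dm, hDmΔ, hcase⟩ := hrun m hmt
  have hnot_m : oneEq n ∉ u m := Nat.find_min hex (by omega)
  have hDle : linneg Dm ≤ spn (u m) := by
    rcases hcase with ⟨hle, -⟩ | ⟨f, hCD, heq⟩
    · exact hle
    · exfalso
      have hj1 : oneEq n ∈ u (m + 1) := by rw [← hjm]; exact hjmem
      rw [heq] at hj1
      rcases Set.mem_insert_iff.1 hj1 with hf | hf
      · have h4 := hCD.2.2.2
        rw [← hf, add_self'] at h4
        exact h4 (Submodule.zero_mem _)
      · exact hnot_m hf
  obtain ⟨k, hkm, Cs, V, hproof, hVk⟩ := main_aux Δ u m hstep Dm hDmΔ hDle m 0 (by omega)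
  have hVC : V k ≤ linneg C := by
    rw [h0] at hVk
    rwa [spn, Submodule.span_eq] at hVk
  -- build C'
  set S : Set (Eqn n) := (fun e => e + oneEq n) '' (V k : Set (Eqn n)) with hS
  set C' : Clause n := (Set.toFinite S).toFinset with hC'
  have hCoe : (C' : Set (Eqn n)) = S := Set.Finite.coe_toFinset _
  have hlin : linneg C' = V k := by
    rw [linneg, hCoe, hS, ← Set.image_comp]
    have hfun : ((fun e => e + oneEq n) ∘ (fun e : Eqn n => e + oneEq n)) = id := by
      funext e
      simp only [Function.comp_apply, id_eq, add_assoc, add_self', add_zero]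
    rw [hfun, Set.image_id, Submodule.span_eq]
  exact ⟨k, by omega, Cs, V, hproof, C', hlin, hlin ▸ hVC⟩


end XorSAT
end
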